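/- arXiv:0904.2101 — 11 statements merged into one kernel-verified Lean document; each statement's English description precedes it below -/
import Mathlib

section
/- For every positive integer n, the 2-adic valuation of ((2n-1)!! + (-1)^((n-1)(n-2)/2)) equals 1 + v_2(n), i.e., the number ((2n-1)!! + (-1)^((n-1)(n-2)/2))/2 has the same 2-adic valuation as n. -/
/-!
Write `n = 2^v u` with `u` odd and `ε(n) = (-1)^((n-1)(n-2)/2)`, which depends only on `n mod 4`.
We prove the sharper congruence `(2n-1)!! ≡ 2n - ε(n) (mod 2^(v+3))`; then
`(2n-1)!! + ε(n) ≡ 2n (mod 2^(v+3))` has valuation exactly `v + 1`.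

Expanding `∏ (2m + (2i+1))` to first order in `2m`, and using that odd numbers are their own
inverses mod 8, shows: if `4 ∣ 2^w ∣ m`, shifting a block of `m` consecutive odd numbers by `2m`
does not change its product mod `2^(w+4)`. Hence a product of `2^k` consecutive odd numbers
is `≡ 1 (mod 2^(k+1))` for `k ≥ 2`, which makes the congruence periodic in `u` with period 4,
and `(4m-1)!! ≡ ((2m-1)!!)^2 (mod 2^(w+4))`, which lifts it from `v` to `v + 1`.
The cases `v ≤ 2`, `u ∈ {1, 3}` are checked directly.
-/

open Finset

theorem sq_dvd_prod_add_sub {R ι : Type*} [CommRing R] [DecidableEq ι] (c : R) (f : ι → R)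
    (s : Finset ι) :
    c ^ 2 ∣ ∏ j ∈ s, (c + f j) - (∏ j ∈ s, f j + c * ∑ j ∈ s, ∏ i ∈ s.erase j, f i) := by
  induction s using Finset.induction_on with
  | empty => simp
  | insert a s ha ih =>
    obtain ⟨r, hr⟩ := ih
    have herase : ∀ j ∈ s, ∏ i ∈ (insert a s).erase j, f i = f a * ∏ i ∈ s.erase j, f i := by
      intro j hj
      rw [erase_insert_of_ne (ne_of_mem_of_not_mem hj ha).symm,
        prod_insert fun h ↦ ha (mem_of_mem_erase h)]
    rw [prod_insert ha, prod_insert ha, sum_insert ha, erase_insert ha, sum_congr rfl herase,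
      ← mul_sum]
    exact ⟨∑ j ∈ s, ∏ i ∈ s.erase j, f i + c * r + f a * r, by linear_combination (c + f a) * hr⟩

theorem Int.sq_modEq_sq_of_modEq_two_pow {a b : ℤ} {w : ℕ} (h : a ≡ b [ZMOD 2 ^ (w + 1)]) :
    a ^ 2 ≡ b ^ 2 [ZMOD 2 ^ (w + 2)] := by
  obtain ⟨t, ht⟩ := Int.modEq_iff_dvd.mp h
  exact Int.modEq_iff_dvd.mpr ⟨a * t + 2 ^ w * t ^ 2, by
    rw [show b = a + 2 ^ (w + 1) * t by linarith]; ring⟩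

theorem padicValNat_pow_mul_of_not_dvd {p u : ℕ} [Fact p.Prime] (k : ℕ) (hu : ¬p ∣ u) :
    padicValNat p (p ^ k * u) = k := by
  have hu0 : u ≠ 0 := by rintro rfl; exact hu (dvd_zero p)
  rw [padicValNat.mul (pow_ne_zero k (Fact.out : p.Prime).ne_zero) hu0, padicValNat.prime_pow,
    padicValNat.eq_zero_of_not_dvd hu, add_zero]

theorem padicValInt_pow_mul_of_not_dvd {p : ℕ} {u : ℤ} [Fact p.Prime] (k : ℕ) (hu : ¬(p : ℤ) ∣ u) :
    padicValInt p (p ^ k * u) = k := by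
  rw [padicValInt, Int.natAbs_mul, Int.natAbs_pow, Int.natAbs_natCast]
  exact padicValNat_pow_mul_of_not_dvd k (Int.natCast_dvd.not.mp hu)

/-- `oddProd 0 n` is the double factorial `(2n-1)!!`. -/
def oddProd (a : ℤ) (m : ℕ) : ℤ := ∏ i ∈ range m, (2 * (a + i) + 1)

def signMod4 (n : ℕ) : ℤ := if n % 4 = 0 ∨ n % 4 = 3 then -1 else 1

theorem neg_one_pow_eq_signMod4 {n : ℕ} (hn : n ≠ 0) :
    (-1 : ℤ) ^ ((n - 1) * (n - 2) / 2) = signMod4 n := by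
  rw [neg_one_pow_eq_pow_mod_two, ← Nat.mod_mul_right_div_self, Nat.mul_mod, signMod4]
  have : n % 4 < 4 := Nat.mod_lt _ (by norm_num)
  interval_cases h : n % 4
  · rw [show (n - 1) % 4 = 3 by omega, show (n - 2) % 4 = 2 by omega]; rfl
  · rw [show (n - 1) % 4 = 0 by omega, zero_mul]; rfl
  · rw [show (n - 1) % 4 = 1 by omega, show (n - 2) % 4 = 0 by omega]; rfl
  · rw [show (n - 1) % 4 = 2 by omega, show (n - 2) % 4 = 1 by omega]; rfl

theorem signMod4_add_four_mul (n j : ℕ) : signMod4 (n + 4 * j) = signMod4 n := by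
  simp only [signMod4, Nat.add_mul_mod_self_left]

theorem signMod4_two_pow_mul {k : ℕ} (hk : 2 ≤ k) (u : ℕ) : signMod4 (2 ^ k * u) = -1 := by
  obtain ⟨k, rfl⟩ := Nat.exists_eq_add_of_le' hk
  rw [show 2 ^ (k + 2) * u = 4 * (2 ^ k * u) by ring]
  simp [signMod4]

theorem oddProd_add (a : ℤ) (m k : ℕ) : oddProd a (m + k) = oddProd a m * oddProd (a + m) k := by
  simp only [oddProd, prod_range_add, Nat.cast_add, add_assoc]

theorem sum_range_two_mul_add_one (a : ℤ) (m : ℕ) :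
    ∑ j ∈ range m, (2 * (a + j) + 1) = m * (2 * a + m) := by
  induction m with
  | zero => simp
  | succ m ih => rw [sum_range_succ, ih]; push_cast; ring

theorem eight_dvd_sum_prod_erase (a : ℤ) {m : ℕ} (hm : 4 ∣ m) :
    (8 : ℤ) ∣ ∑ j ∈ range m, ∏ i ∈ (range m).erase j, (2 * (a + i) + 1) := by
  obtain ⟨t, rfl⟩ := hm
  have hsum : ∑ j ∈ range (4 * t), (2 * (a + j) + 1) = 8 * (t * (a + 2 * t)) := by
    rw [sum_range_two_mul_add_one]; push_cast; ring
  rw [show (8 : ℤ) = (8 : ℕ) from rfl, ← ZMod.intCast_zmod_eq_zero_iff_dvd]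
  push_cast
  set g : ℕ → ZMod 8 := fun i ↦ 2 * (a + i) + 1
  have hg : ∀ i, g i ^ 2 = 1 := fun i ↦ (by decide : ∀ x : ZMod 8, (2 * x + 1) ^ 2 = 1) _
  have herase : ∀ j ∈ range (4 * t), ∏ i ∈ (range (4 * t)).erase j, g i =
      (∏ i ∈ range (4 * t), g i) * g j := by
    intro j hj
    rw [← mul_prod_erase _ g hj]
    linear_combination (-∏ i ∈ (range (4 * t)).erase j, g i) * hg j
  have hsum8 : ∑ j ∈ range (4 * t), g j = 0 := by
    have := congrArg (Int.cast : ℤ → ZMod 8) hsum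
    push_cast at this
    rw [this]; exact zero_mul _
  rw [sum_congr rfl herase, ← mul_sum, hsum8, mul_zero]

theorem oddProd_add_self_modEq (a : ℤ) {m w : ℕ} (hw : 2 ≤ w) (hm : 2 ^ w ∣ m) :
    oddProd (a + m) m ≡ oddProd a m [ZMOD 2 ^ (w + 4)] := by
  obtain ⟨r, hr⟩ := sq_dvd_prod_add_sub (2 * (m : ℤ)) (fun j : ℕ ↦ 2 * (a + j) + 1) (range m)
  obtain ⟨s, hs⟩ := eight_dvd_sum_prod_erase a ((pow_dvd_pow 2 hw).trans hm)
  have hshift : oddProd (a + m) m = ∏ j ∈ range m, (2 * (m : ℤ) + (2 * (a + j) + 1)) :=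
    prod_congr rfl fun j _ ↦ by ring
  obtain ⟨w, rfl⟩ := Nat.exists_eq_add_of_le' hw
  obtain ⟨u, rfl⟩ := hm
  rw [Int.modEq_iff_dvd, hshift, oddProd]
  push_cast at hr hs ⊢
  exact ⟨-(u * s) - 2 ^ w * u ^ 2 * r, by rw [hs] at hr; linear_combination -hr⟩

theorem oddProd_two_pow_modEq_one (a : ℤ) {k : ℕ} (hk : 2 ≤ k) :
    oddProd a (2 ^ k) ≡ 1 [ZMOD 2 ^ (k + 1)] := by
  induction k, hk using Nat.le_induction generalizing a with
  | base =>
    change oddProd a 4 ≡ 1 [ZMOD (8 : ℕ)]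
    rw [← ZMod.intCast_eq_intCast_iff]
    have h : ∀ x : ZMod 8, ∏ i ∈ range 4, (2 * (x + i) + 1) = 1 := by decide
    push_cast [oddProd]
    exact h a
  | succ k hk ih =>
    set Q := oddProd a (2 ^ k)
    calc oddProd a (2 ^ (k + 1)) = Q * oddProd (a + (2 ^ k : ℕ)) (2 ^ k) := by
          rw [pow_succ, mul_two, oddProd_add]
      _ ≡ Q * Q [ZMOD 2 ^ (k + 2)] :=
          ((oddProd_add_self_modEq a hk dvd_rfl).of_dvd (pow_dvd_pow 2 (by omega))).mul_left Q
      _ = Q ^ 2 := (sq Q).symm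
      _ ≡ 1 ^ 2 [ZMOD 2 ^ (k + 2)] := Int.sq_modEq_sq_of_modEq_two_pow (ih a)
      _ = 1 := one_pow 2

theorem oddProd_zero_add_two_pow_modEq (n : ℕ) {k : ℕ} (hk : 2 ≤ k) :
    oddProd 0 (n + 2 ^ k) ≡ oddProd 0 n [ZMOD 2 ^ (k + 1)] := by
  rw [oddProd_add]
  simpa using (oddProd_two_pow_modEq_one (0 + n) hk).mul_left (oddProd 0 n)

theorem oddProd_two_pow_mul_add_four_modEq {v u : ℕ}
    (h : oddProd 0 (2 ^ v * u) ≡ 2 ^ (v + 1) * u - signMod4 (2 ^ v * u) [ZMOD 2 ^ (v + 3)]) :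
    oddProd 0 (2 ^ v * (u + 4)) ≡
      2 ^ (v + 1) * (u + 4 : ℕ) - signMod4 (2 ^ v * (u + 4)) [ZMOD 2 ^ (v + 3)] := by
  have hn : 2 ^ v * (u + 4) = 2 ^ v * u + 2 ^ (v + 2) := by ring
  have hsign : signMod4 (2 ^ v * u + 2 ^ (v + 2)) = signMod4 (2 ^ v * u) := by
    rw [show 2 ^ (v + 2) = 4 * 2 ^ v by ring, signMod4_add_four_mul]
  rw [hn, hsign]
  calc oddProd 0 (2 ^ v * u + 2 ^ (v + 2)) ≡ oddProd 0 (2 ^ v * u) [ZMOD 2 ^ (v + 3)] :=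
        oddProd_zero_add_two_pow_modEq _ (by omega)
    _ ≡ 2 ^ (v + 1) * u - signMod4 (2 ^ v * u) [ZMOD 2 ^ (v + 3)] := h
    _ ≡ 2 ^ (v + 1) * (u + 4 : ℕ) - signMod4 (2 ^ v * u) [ZMOD 2 ^ (v + 3)] :=
        Int.modEq_iff_dvd.mpr ⟨1, by push_cast; ring⟩

theorem oddProd_two_pow_mul_succ_modEq {v u : ℕ}
    (h : oddProd 0 (2 ^ (v + 2) * u) ≡
      2 ^ (v + 3) * u - signMod4 (2 ^ (v + 2) * u) [ZMOD 2 ^ (v + 5)]) :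
    oddProd 0 (2 ^ (v + 3) * u) ≡
      2 ^ (v + 4) * u - signMod4 (2 ^ (v + 3) * u) [ZMOD 2 ^ (v + 6)] := by
  set m := 2 ^ (v + 2) * u
  rw [signMod4_two_pow_mul (by omega)] at h ⊢
  calc oddProd 0 (2 ^ (v + 3) * u) = oddProd 0 m * oddProd (0 + m) m := by
        rw [← oddProd_add, show m + m = 2 ^ (v + 3) * u by ring]
    _ ≡ oddProd 0 m * oddProd 0 m [ZMOD 2 ^ (v + 6)] :=
        (oddProd_add_self_modEq 0 (w := v + 2) (by omega) (dvd_mul_right _ _)).mul_left _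
    _ = oddProd 0 m ^ 2 := (sq _).symm
    _ ≡ (2 ^ (v + 3) * u - -1) ^ 2 [ZMOD 2 ^ (v + 6)] := Int.sq_modEq_sq_of_modEq_two_pow h
    _ ≡ 2 ^ (v + 4) * u - -1 [ZMOD 2 ^ (v + 6)] :=
        Int.modEq_iff_dvd.mpr ⟨-(2 ^ v * u ^ 2), by ring⟩

theorem oddProd_two_pow_mul_one_three_modEq (v : ℕ) {u : ℕ} (hu : u = 1 ∨ u = 3) :
    oddProd 0 (2 ^ v * u) ≡ 2 ^ (v + 1) * u - signMod4 (2 ^ v * u) [ZMOD 2 ^ (v + 3)] :=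
  match v with
  | 0 | 1 | 2 => by rcases hu with rfl | rfl <;> decide
  | v + 3 => oddProd_two_pow_mul_succ_modEq (oddProd_two_pow_mul_one_three_modEq (v + 2) hu)

theorem oddProd_two_pow_mul_modEq (v : ℕ) {u : ℕ} (hu : Odd u) :
    oddProd 0 (2 ^ v * u) ≡ 2 ^ (v + 1) * u - signMod4 (2 ^ v * u) [ZMOD 2 ^ (v + 3)] := by
  induction u using Nat.strong_induction_on with
  | _ u ih =>
  by_cases hu4 : u < 4
  · obtain ⟨k, rfl⟩ := hu
    exact oddProd_two_pow_mul_one_three_modEq v (by omega)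
  · obtain ⟨u, rfl⟩ : ∃ u', u = u' + 4 := ⟨u - 4, by omega⟩
    exact oddProd_two_pow_mul_add_four_modEq
      (ih u (by omega) ((Nat.odd_add.mp hu).mpr (by decide)))

/-- For every positive integer `n`, the 2-adic valuation of
`(2n-1)!! + (-1)^((n-1)(n-2)/2)` equals `1 + v₂(n)`, where
`(2n-1)!! = ∏ i < n, (2i+1)`. -/
theorem stmt0 (n : ℕ) (hn : 1 ≤ n) :
    padicValInt 2 ((∏ i ∈ Finset.range n, (2 * (i : ℤ) + 1)) +
      (-1) ^ ((n - 1) * (n - 2) / 2)) = 1 + padicValNat 2 n := by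
  obtain ⟨v, u, hu, rfl⟩ := Nat.exists_eq_two_pow_mul_odd (n := n) (by omega)
  obtain ⟨t, ht⟩ := Int.modEq_iff_dvd.mp (oddProd_two_pow_mul_modEq v hu).symm
  have hsum : (∏ i ∈ range (2 ^ v * u), (2 * (i : ℤ) + 1)) +
      (-1) ^ ((2 ^ v * u - 1) * (2 ^ v * u - 2) / 2) = 2 ^ (v + 1) * (u + 4 * t) := by
    rw [neg_one_pow_eq_signMod4 (by omega)]
    simp only [oddProd, zero_add] at ht
    linear_combination ht
  have hodd : ¬(2 : ℤ) ∣ u + 4 * t := by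
    have := Nat.odd_iff.mp hu
    omega
  rw [hsum, padicValNat_pow_mul_of_not_dvd v hu.not_two_dvd_nat, add_comm 1]
  simpa using padicValInt_pow_mul_of_not_dvd (p := 2) (v + 1) hodd
end

section
/- For every integer k ≥ 1, the 2-adic valuation of (16k-9)!! - 1 equals 3. -/
/-!
Every block of eight consecutive odd numbers runs through all odd residues mod 16, whose product
`1 · 3 · 5 ⋯ 15` is `1` mod 16. Hence `(16k - 9)!!`, a product of `8(k - 1) + 4` odd numbers, is
`1 · 3 · 5 · 7 = 105 ≡ 9` mod 16, and `(16k - 9)!! - 1 ≡ 8` mod 16 has 2-adic valuation exactly 3.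
-/

open Finset

theorem padicValNat_eq_of_pow_dvd_of_not_pow_succ_dvd {p n k : ℕ} (hp : p ≠ 1)
    (hdvd : p ^ k ∣ n) (hndvd : ¬p ^ (k + 1) ∣ n) : padicValNat p n = k := by
  have hn : n ≠ 0 := by
    rintro rfl
    exact hndvd (dvd_zero _)
  refine le_antisymm ?_ ((padicValNat_dvd_iff_le_of_ne_one hp hn).mp hdvd)
  by_contra! hlt
  exact hndvd ((padicValNat_dvd_iff_le_of_ne_one hp hn).mpr hlt)

theorem prod_range_eight_odd_modEq_one (n : ℕ) :
    ∏ j ∈ range 8, (2 * (n + j) + 1) ≡ 1 [MOD 16] := by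
  have hreduce : ∀ j ∈ range 8, (2 * (n + j) + 1) % 16 = (2 * (n % 8 + j) + 1) % 16 := by
    intro j _
    omega
  unfold Nat.ModEq
  rw [prod_nat_mod, prod_congr rfl hreduce]
  have hn : n % 8 < 8 := Nat.mod_lt n (by norm_num)
  interval_cases n % 8 <;> decide

theorem prod_range_odd_add_eight_mul_modEq (m r : ℕ) :
    ∏ i ∈ range (8 * m + r), (2 * i + 1) ≡ ∏ i ∈ range r, (2 * i + 1) [MOD 16] := by
  induction m with
  | zero => rw [Nat.mul_zero, Nat.zero_add]
  | succ m ih =>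
    rw [show 8 * (m + 1) + r = (8 * m + r) + 8 by ring, prod_range_add, ← mul_one (∏ i ∈ range r, _)]
    exact ih.mul (prod_range_eight_odd_modEq_one _)

/-- For every `k ≥ 1`, `v₂((16k-9)!! - 1) = 3`, where
`(16k-9)!! = (2(8k-4)-1)!! = ∏ i < 8k-4, (2i+1)`. -/
theorem stmt1 (k : ℕ) (hk : 1 ≤ k) :
    padicValNat 2 ((∏ i ∈ Finset.range (8 * k - 4), (2 * i + 1)) - 1) = 3 := by
  obtain ⟨m, rfl⟩ : ∃ m, k = m + 1 := ⟨k - 1, by omega⟩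
  have hmod : (∏ i ∈ range (8 * (m + 1) - 4), (2 * i + 1)) % 16 = 9 := by
    rw [show 8 * (m + 1) - 4 = 8 * m + 4 by omega]
    exact (prod_range_odd_add_eight_mul_modEq m 4).trans (show 105 ≡ 9 [MOD 16] by decide)
  apply padicValNat_eq_of_pow_dvd_of_not_pow_succ_dvd (by norm_num) <;> omega
end

section
/- For every integer t ≥ 3 and every odd positive integer u, the 2-adic valuation of (2^t·u - 1)!! - 1 equals t. -/
/-!
Write `P n = ∏ i < n, (2 i + 1)`. If `c` is square-zero and `8 c = 0` in a commutative ring, then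
`x + c = x (1 + c x)` for every odd `x` (as `x ^ 2 ≡ 1 mod 8`), so shifting all factors of `P n` by
`c` multiplies it by `1 + c n ^ 2`. With `N = 2 ^ (t - 1)` this gives `P (N u) ≡ P N ^ u` modulo
`2 ^ (t + 1)`, and for `u = 2` modulo `2 ^ (t + 2)`; the latter yields `P N ≡ 1 + 2 ^ t` modulo
`2 ^ (t + 1)` by induction on `t`. Hence `P (N u) ≡ (1 + 2 ^ t) ^ u ≡ 1 + 2 ^ t` for odd `u`, so
`2 ^ t` exactly divides `P (N u) - 1`.
-/

open Finset

section CommRing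

variable {R : Type*} [CommRing R]

theorem prod_one_add_mul_of_mul_self_eq_zero {ι : Type*} (s : Finset ι) {c : R} (hc : c * c = 0)
    (f : ι → R) : ∏ i ∈ s, (1 + c * f i) = 1 + c * ∑ i ∈ s, f i := by
  classical
  induction s using Finset.induction_on with
  | empty => simp
  | insert j s hj ih =>
    rw [prod_insert hj, sum_insert hj, ih]
    linear_combination f j * (∑ i ∈ s, f i) * hc

theorem one_add_pow_of_mul_self_eq_zero {c : R} (hc : c * c = 0) (n : ℕ) :
    (1 + c) ^ n = 1 + n * c := by
  simpa [mul_comm] using prod_one_add_mul_of_mul_self_eq_zero (range n) hc (fun _ => 1)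

theorem sum_range_two_mul_add_one_s2 (n : ℕ) : ∑ i ∈ range n, (2 * (i : R) + 1) = n ^ 2 := by
  induction n with
  | zero => simp
  | succ n ih => rw [sum_range_succ, ih]; push_cast; ring

theorem odd_sq_mul_of_eight_mul_eq_zero {c : R} (h8 : 8 * c = 0) (r : ℕ) :
    (2 * (r : R) + 1) ^ 2 * c = c := by
  obtain ⟨k, hk⟩ := Nat.even_mul_succ_self r
  have hr : ((r * (r + 1) : ℕ) : R) = ((k + k : ℕ) : R) := congrArg _ hk
  push_cast at hr
  linear_combination (4 * c) * hr + (k : R) * h8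

theorem prod_range_odd_add (n : ℕ) {c : R} (h8 : 8 * c = 0) (hc : c * c = 0) :
    ∏ r ∈ range n, (2 * (r : R) + 1 + c)
      = (∏ r ∈ range n, (2 * (r : R) + 1)) * (1 + c * n ^ 2) := by
  have hfactor (r : ℕ) : 2 * (r : R) + 1 + c = (2 * r + 1) * (1 + c * (2 * r + 1)) := by
    linear_combination -(odd_sq_mul_of_eight_mul_eq_zero h8 r)
  rw [prod_congr rfl fun r _ => hfactor r, prod_mul_distrib,
    prod_one_add_mul_of_mul_self_eq_zero _ hc, sum_range_two_mul_add_one_s2]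

theorem prod_range_odd_mul_eq_pow {N : ℕ} (h16 : 16 * (N : R) = 0) (h2 : 2 * (N : R) * N = 0)
    (u : ℕ) : ∏ i ∈ range (N * u), (2 * (i : R) + 1) = (∏ i ∈ range N, (2 * (i : R) + 1)) ^ u := by
  induction u with
  | zero => simp
  | succ u ih =>
    set c : R := 2 * N * u
    have hshift : ∏ r ∈ range N, (2 * ((N * u + r : ℕ) : R) + 1)
        = ∏ r ∈ range N, (2 * (r : R) + 1 + c) :=
      prod_congr rfl fun r _ => by push_cast; ring
    have h8 : 8 * c = 0 := by linear_combination (u : R) * h16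
    have hc : c * c = 0 := by linear_combination (2 * u * u : R) * h2
    have hcN : c * N ^ 2 = 0 := by linear_combination (N * u : R) * h2
    rw [Nat.mul_succ, prod_range_add, ih, hshift, prod_range_odd_add N h8 hc, hcN, pow_succ]
    ring

end CommRing

theorem Int.sq_modEq_one_add_two_pow_succ {x : ℤ} {t : ℕ} (ht : 2 ≤ t)
    (h : x ≡ 1 + 2 ^ t [ZMOD 2 ^ (t + 1)]) : x ^ 2 ≡ 1 + 2 ^ (t + 1) [ZMOD 2 ^ (t + 2)] := by
  obtain ⟨s, rfl⟩ := Nat.exists_eq_add_of_le' ht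
  obtain ⟨k, hk⟩ := h.dvd
  refine Int.modEq_iff_dvd.2 ⟨k - 2 ^ s * (1 - 2 * k) ^ 2, ?_⟩
  linear_combination (x + 1 + 2 ^ (s + 2) - 2 ^ (s + 3) * k) * hk

theorem prod_range_two_pow_modEq {t : ℕ} (ht : 3 ≤ t) :
    ∏ i ∈ range (2 ^ (t - 1)), (2 * (i : ℤ) + 1) ≡ 1 + 2 ^ t [ZMOD 2 ^ (t + 1)] := by
  induction t, ht using Nat.le_induction with
  | base => decide
  | succ t ht ih =>
    obtain ⟨s, rfl⟩ : ∃ s, t = s + 1 := ⟨t - 1, by omega⟩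
    have hzero {k : ℕ} (hk : s + 3 ≤ k) : (2 : ZMod (2 ^ (s + 3))) ^ k = 0 := by
      simpa using ZMod.natCast_pow_eq_zero_of_le 2 hk
    have hsq : ∏ i ∈ range (2 ^ (s + 1)), (2 * (i : ℤ) + 1)
        ≡ (∏ i ∈ range (2 ^ s), (2 * (i : ℤ) + 1)) ^ 2 [ZMOD 2 ^ (s + 3)] := by
      have key : ((∏ i ∈ range (2 ^ s * 2), (2 * (i : ℤ) + 1) : ℤ) : ZMod (2 ^ (s + 3)))
          = ((∏ i ∈ range (2 ^ s), (2 * (i : ℤ) + 1)) ^ 2 : ℤ) := by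
        push_cast
        apply prod_range_odd_mul_eq_pow
        · push_cast; linear_combination hzero (k := s + 4) (by omega)
        · push_cast; linear_combination hzero (k := 2 * s + 1) (by omega)
      rw [pow_succ]
      exact_mod_cast (ZMod.intCast_eq_intCast_iff _ _ _).1 key
    exact hsq.trans (Int.sq_modEq_one_add_two_pow_succ (by omega) ih)

theorem prod_range_two_pow_mul_odd {t u : ℕ} (ht : 3 ≤ t) (hu : Odd u) :
    ∏ i ∈ range (2 ^ (t - 1) * u), (2 * (i : ZMod (2 ^ (t + 1))) + 1) = 1 + 2 ^ t := by
  obtain ⟨s, rfl⟩ : ∃ s, t = s + 1 := ⟨t - 1, by omega⟩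
  have hzero {k : ℕ} (hk : s + 2 ≤ k) : (2 : ZMod (2 ^ (s + 2))) ^ k = 0 := by
    simpa using ZMod.natCast_pow_eq_zero_of_le 2 hk
  have hbase : ∏ i ∈ range (2 ^ s), (2 * (i : ZMod (2 ^ (s + 2))) + 1) = 1 + 2 ^ (s + 1) := by
    have h := prod_range_two_pow_modEq ht
    rw [show (2 : ℤ) ^ (s + 1 + 1) = ((2 ^ (s + 2) : ℕ) : ℤ) by push_cast; ring] at h
    simpa using (ZMod.intCast_eq_intCast_iff _ _ _).2 h
  obtain ⟨m, rfl⟩ := hu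
  rw [Nat.add_sub_cancel, prod_range_odd_mul_eq_pow, hbase, one_add_pow_of_mul_self_eq_zero]
  · push_cast
    linear_combination (m : ZMod (2 ^ (s + 2))) * hzero le_rfl
  · linear_combination hzero (k := 2 * s + 2) (by omega)
  · push_cast; linear_combination 4 * hzero (k := s + 2) le_rfl
  · push_cast; linear_combination hzero (k := 2 * s + 1) (by omega)

theorem padicValNat_eq_of_modEq_pow {p n t : ℕ} [hp : Fact p.Prime]
    (h : n ≡ p ^ t [MOD p ^ (t + 1)]) : padicValNat p n = t := by
  have hdvd : p ^ t ∣ n := (h.dvd_iff (pow_dvd_pow p t.le_succ)).2 dvd_rfl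
  have hndvd : ¬ p ^ (t + 1) ∣ n := fun hn =>
    absurd ((Nat.pow_dvd_pow_iff_le_right hp.out.one_lt).1 ((h.dvd_iff dvd_rfl).1 hn)) (by omega)
  have hn : n ≠ 0 := by rintro rfl; exact hndvd (dvd_zero _)
  rw [padicValNat_dvd_iff_le hn] at hdvd hndvd
  omega

theorem stmt2_general (t u : ℕ) (ht : 3 ≤ t) (hu : Odd u) :
    padicValNat 2 ((∏ i ∈ Finset.range (2 ^ (t - 1) * u), (2 * i + 1)) - 1) = t := by
  have hpos : 1 ≤ ∏ i ∈ range (2 ^ (t - 1) * u), (2 * i + 1) :=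
    Nat.one_le_iff_ne_zero.2 (prod_ne_zero_iff.2 fun i _ => by omega)
  apply padicValNat_eq_of_modEq_pow
  rw [← ZMod.natCast_eq_natCast_iff, Nat.cast_sub hpos, Nat.cast_prod]
  push_cast
  rw [prod_range_two_pow_mul_odd ht hu]
  ring

/-- For `t ≥ 3` and odd positive `u`, `v₂((2^t·u - 1)!! - 1) = t`, where
`(2^t·u - 1)!! = ∏ i < 2^(t-1)·u, (2i+1)`. -/
theorem stmt2 (t u : ℕ) (ht : 3 ≤ t) (hu : Odd u) (hu0 : 0 < u) :
    padicValNat 2 ((∏ i ∈ Finset.range (2 ^ (t - 1) * u), (2 * i + 1)) - 1) = t :=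
  stmt2_general t u ht hu
end

section
/- For every positive odd integer x and every positive integer n, the 2-adic valuation of (2n-1)!!^x + (-1)^((n-1)(n-2)/2) equals the 2-adic valuation of 2n. -/
/-!
Write `D n = (2n-1)!!` and `ε n = (-1)^((n-1)(n-2)/2)`. For odd `x` we have
`D^x + ε = D^x - (-ε)^x`, whose cofactor over `D + ε` is a sum of `x` odd terms, so it
suffices to show `v₂(D n + ε n) = v₂ n + 1`. When `4 ∤ n` this is read off modulo 8, where
`D n + ε n` only depends on `n mod 4`. For `n = 4k`, reflecting the upper half of the product
gives `D (4k) ≡ D (2k)^2 [ZMOD 16k]`, and if `a + e ≡ 2^j [ZMOD 2^(j+1)]` with `e = ±1` and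
`j ≥ 2`, then `a^2 - 1 ≡ 2^(j+1) [ZMOD 2^(j+2)]`; this lifts the congruence from `2k` to `4k`.
-/

open Finset

theorem prod_range_add_of_mul_self_eq_zero {R : Type*} [CommRing R] {a : ℕ → R} {c : R}
    (hc : c * c = 0) (hac : ∀ i, c * a i = c) (m : ℕ) :
    ∏ i ∈ range m, (a i + c) = ∏ i ∈ range m, a i + m * c := by
  induction m with
  | zero => simp
  | succ m ih =>
    have hcP : c * ∏ i ∈ range m, a i = c :=
      prod_induction _ (c * · = c) (fun x y hx hy => by rw [← mul_assoc, hx, hy])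
        (mul_one c) fun i _ => hac i
    rw [prod_range_succ, prod_range_succ, ih]
    push_cast
    linear_combination hcP + m * hac m + m * hc

theorem padicValInt_pow_sub_pow {p : ℕ} [hp : Fact p.Prime] {a b : ℤ} {n : ℕ}
    (hab : (p : ℤ) ∣ a - b) (ha : ¬(p : ℤ) ∣ a) (hn : ¬p ∣ n) :
    padicValInt p (a ^ n - b ^ n) = padicValInt p (a - b) := by
  have hS := not_dvd_geom_sum₂ (Nat.prime_iff_prime_int.mp hp.out) hab ha (by exact_mod_cast hn)
  obtain rfl | hab₀ := eq_or_ne a b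
  · simp
  rw [← geom_sum₂_mul, padicValInt.mul (fun h => hS (by rw [h]; exact dvd_zero _))
    (sub_ne_zero.2 hab₀), padicValInt.eq_zero_of_not_dvd hS, zero_add]

theorem padicValInt_eq_of_modEq_pow {p : ℕ} [hp : Fact p.Prime] {a : ℤ} {k : ℕ}
    (h : a ≡ p ^ k [ZMOD p ^ (k + 1)]) : padicValInt p a = k := by
  have hk : (p : ℤ) ^ k ∣ a :=
    (dvd_sub_right dvd_rfl).mp ((pow_dvd_pow _ k.le_succ).trans h.dvd)
  have hk1 : ¬(p : ℤ) ^ (k + 1) ∣ a := fun ha => by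
    have : (p : ℤ) ^ (k + 1) ∣ p ^ k := by simpa using dvd_add h.dvd ha
    have := (Nat.pow_dvd_pow_iff_le_right hp.out.one_lt).mp (by exact_mod_cast this)
    omega
  have ha : a ≠ 0 := by rintro rfl; exact hk1 (dvd_zero _)
  have hle := ((padicValInt_dvd_iff k a).mp hk).resolve_left ha
  have hlt := mt (padicValInt_dvd_iff (k + 1) a).mpr hk1
  omega

theorem sq_sub_one_modEq_two_pow {a e : ℤ} {j : ℕ} (hj : 2 ≤ j) (he : e = 1 ∨ e = -1)
    (h : a + e ≡ 2 ^ j [ZMOD 2 ^ (j + 1)]) : a ^ 2 - 1 ≡ 2 ^ (j + 1) [ZMOD 2 ^ (j + 2)] := by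
  obtain ⟨i, rfl⟩ : ∃ i, j = i + 2 := ⟨j - 2, by omega⟩
  obtain ⟨t, ht⟩ := h.dvd
  obtain rfl : a = 2 ^ (i + 2) * (1 - 2 * t) - e := by linear_combination -ht
  apply Int.modEq_of_dvd
  rcases he with rfl | rfl
  · exact ⟨1 - t - 2 ^ i * (1 - 2 * t) ^ 2, by ring⟩
  · exact ⟨t - 2 ^ i * (1 - 2 * t) ^ 2, by ring⟩

def oddDoubleFactorial (n : ℕ) : ℤ := ∏ i ∈ range n, (2 * (i : ℤ) + 1)

/-- Periodic of period 4 for `n ≥ 1`, with values `1, 1, -1, -1` at `n = 1, 2, 3, 4`. -/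
def altSign (n : ℕ) : ℤ := (-1) ^ ((n - 1) * (n - 2) / 2)

theorem oddDoubleFactorial_odd (n : ℕ) : Odd (oddDoubleFactorial n) :=
  prod_induction _ Odd (fun _ _ => Odd.mul) odd_one fun _ _ => odd_two_mul_add_one _

theorem oddDoubleFactorial_add_four_modEq (n : ℕ) :
    oddDoubleFactorial (n + 4) ≡ oddDoubleFactorial n [ZMOD 8] := by
  have hsplit : oddDoubleFactorial (n + 4) =
      oddDoubleFactorial n * ((2 * n + 1) * (2 * n + 3) * (2 * n + 5) * (2 * n + 7)) := by
    simp only [oddDoubleFactorial, prod_range_succ]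
    push_cast
    ring
  -- with `u = n (n + 4)` the product is `(4u + 7) (4u + 15) = 1 + 8 (2u² + 11u + 13)`
  have hfour : (2 * (n : ℤ) + 1) * (2 * n + 3) * (2 * n + 5) * (2 * n + 7) ≡ 1 [ZMOD 8] :=
    Int.modEq_of_dvd ⟨-(2 * (n * (n + 4)) ^ 2 + 11 * (n * (n + 4)) + 13), by ring⟩
  simpa [hsplit] using hfour.mul_left (oddDoubleFactorial n)

theorem oddDoubleFactorial_four_mul_add_modEq (k r : ℕ) :
    oddDoubleFactorial (4 * k + r) ≡ oddDoubleFactorial r [ZMOD 8] := by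
  induction k with
  | zero => simp
  | succ k ih =>
    rw [show 4 * (k + 1) + r = 4 * k + r + 4 by ring]
    exact (oddDoubleFactorial_add_four_modEq _).trans ih

theorem oddDoubleFactorial_two_mul (m : ℕ) :
    oddDoubleFactorial (2 * m) =
      oddDoubleFactorial m * ∏ i ∈ range m, (-(2 * (i : ℤ) + 1) + 4 * m) := by
  rw [oddDoubleFactorial, two_mul, prod_range_add]
  congr 1
  conv_rhs => rw [← prod_range_reflect]
  refine prod_congr rfl fun i hi => ?_
  rw [mem_range] at hi
  push_cast [Nat.sub_sub, Nat.cast_sub (show 1 + i ≤ m by omega)]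
  ring

theorem oddDoubleFactorial_four_mul_modEq (k : ℕ) :
    oddDoubleFactorial (4 * k) ≡ oddDoubleFactorial (2 * k) ^ 2 [ZMOD 16 * k] := by
  -- in `ZMod (16k)`, `c = 8k` satisfies `c² = 0` and `c * a = c` for odd `a`
  have hN : ((16 * k : ℕ) : ZMod (16 * k)) = 0 := ZMod.natCast_self _
  push_cast at hN
  have hprod := prod_range_add_of_mul_self_eq_zero (R := ZMod (16 * k))
    (a := fun i => -(2 * (i : ZMod (16 * k)) + 1)) (c := 4 * (2 * k))
    (by linear_combination (4 * k : ZMod (16 * k)) * hN)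
    (fun i => by linear_combination (-(i : ZMod (16 * k)) - 1) * hN) (2 * k)
  have hD : ((oddDoubleFactorial (2 * k) : ℤ) : ZMod (16 * k)) =
      ∏ i ∈ range (2 * k), -(2 * (i : ZMod (16 * k)) + 1) := by
    rw [prod_neg, card_range, (even_two_mul k).neg_one_pow, one_mul, oddDoubleFactorial]
    push_cast
    rfl
  have hcast : ((oddDoubleFactorial (4 * k) : ℤ) : ZMod (16 * k)) =
      ((oddDoubleFactorial (2 * k) ^ 2 : ℤ) : ZMod (16 * k)) := by
    rw [show 4 * k = 2 * (2 * k) by ring, oddDoubleFactorial_two_mul]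
    push_cast at hprod ⊢
    rw [hprod, ← hD]
    linear_combination ((oddDoubleFactorial (2 * k) : ZMod (16 * k)) * k) * hN
  simpa using (ZMod.intCast_eq_intCast_iff _ _ _).mp hcast

theorem altSign_eq_or (n : ℕ) : altSign n = 1 ∨ altSign n = -1 := neg_one_pow_eq_or ℤ _

theorem altSign_add_four {n : ℕ} (hn : 1 ≤ n) : altSign (n + 4) = altSign n := by
  obtain rfl | ⟨k, rfl⟩ : n = 1 ∨ ∃ k, n = k + 2 :=
    (Nat.lt_or_ge n 2).imp (by omega) fun _ => ⟨n - 2, by omega⟩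
  · rfl
  · have hexp : (k + 5) * (k + 4) / 2 = (k + 1) * k / 2 + 2 * (2 * k + 5) := by
      rw [show (k + 5) * (k + 4) = (k + 1) * k + 2 * (2 * (2 * k + 5)) by ring]
      exact Nat.add_mul_div_left _ _ two_pos
    show (-1 : ℤ) ^ ((k + 5) * (k + 4) / 2) = (-1) ^ ((k + 1) * k / 2)
    rw [hexp, pow_add, pow_mul, neg_one_sq, one_pow, mul_one]

theorem altSign_four_mul_add (k : ℕ) {r : ℕ} (hr : 1 ≤ r) :
    altSign (4 * k + r) = altSign r := by
  induction k with
  | zero => simp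
  | succ k ih => rw [show 4 * (k + 1) + r = 4 * k + r + 4 by ring, altSign_add_four (by omega), ih]

theorem oddDoubleFactorial_add_altSign_four_mul_add_modEq (k : ℕ) {r : ℕ} (hr : 1 ≤ r) :
    oddDoubleFactorial (4 * k + r) + altSign (4 * k + r) ≡
      oddDoubleFactorial r + altSign r [ZMOD 8] := by
  rw [altSign_four_mul_add k hr]
  exact (oddDoubleFactorial_four_mul_add_modEq k r).add_right _

theorem oddDoubleFactorial_add_altSign_modEq {o : ℕ} (ho : Odd o) : ∀ v : ℕ,
    oddDoubleFactorial (2 ^ v * o) + altSign (2 ^ v * o) ≡ 2 ^ (v + 1) [ZMOD 2 ^ (v + 2)]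
  | 0 => by
    rw [pow_zero, one_mul]
    obtain ⟨k, rfl | rfl⟩ : ∃ k, o = 4 * k + 1 ∨ o = 4 * k + 3 :=
      ⟨o / 4, by have := Nat.odd_iff.mp ho; omega⟩
    · exact .trans (.of_dvd (by norm_num)
        (oddDoubleFactorial_add_altSign_four_mul_add_modEq k le_rfl)) (by decide)
    · exact .trans (.of_dvd (by norm_num)
        (oddDoubleFactorial_add_altSign_four_mul_add_modEq k (by norm_num))) (by decide)
  | 1 => by
    obtain ⟨k, rfl⟩ := ho
    rw [show 2 ^ 1 * (2 * k + 1) = 4 * k + 2 by ring]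
    exact (oddDoubleFactorial_add_altSign_four_mul_add_modEq k (by norm_num)).trans (by decide)
  | v + 2 => by
    have ih := oddDoubleFactorial_add_altSign_modEq ho (v + 1)
    set k := 2 ^ v * o with hk
    have hk1 : 1 ≤ k := Nat.mul_pos (Nat.two_pow_pos v) ho.pos
    rw [show 2 ^ (v + 1) * o = 2 * k by rw [hk]; ring] at ih
    have hsign : altSign (4 * k) = -1 := by
      rw [show 4 * k = 4 * (k - 1) + 4 by omega, altSign_four_mul_add _ (by norm_num)]
      decide
    have hsq := sq_sub_one_modEq_two_pow (by omega) (altSign_eq_or _) ih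
    have hdbl := (oddDoubleFactorial_four_mul_modEq k).of_dvd
      (show (2 : ℤ) ^ (v + 2 + 2) ∣ 16 * k from ⟨o, by push_cast [hk]; ring⟩)
    rw [show 2 ^ (v + 2) * o = 4 * k by rw [hk]; ring, hsign, ← sub_eq_add_neg]
    exact (hdbl.sub_right 1).trans hsq

theorem padicValInt_oddDoubleFactorial_add_altSign {n : ℕ} (hn : n ≠ 0) :
    padicValInt 2 (oddDoubleFactorial n + altSign n) = padicValNat 2 (2 * n) := by
  obtain ⟨v, o, ho, rfl⟩ := Nat.exists_eq_two_pow_mul_odd hn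
  rw [← mul_assoc, ← pow_succ', padicValNat.mul (by positivity) ho.pos.ne',
    padicValNat.prime_pow, padicValNat.eq_zero_of_not_dvd ho.not_two_dvd_nat, add_zero]
  exact padicValInt_eq_of_modEq_pow (by exact_mod_cast oddDoubleFactorial_add_altSign_modEq ho v)

theorem stmt3_general (x n : ℕ) (hx : Odd x) (hn : 1 ≤ n) :
    padicValInt 2 ((∏ i ∈ Finset.range n, (2 * (i : ℤ) + 1)) ^ x +
      (-1) ^ ((n - 1) * (n - 2) / 2)) = padicValNat 2 (2 * n) := by
  change padicValInt 2 (oddDoubleFactorial n ^ x + altSign n) = _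
  have hD := oddDoubleFactorial_odd n
  have hε : Odd (altSign n) := by rcases altSign_eq_or n with h | h <;> simp [h]
  have hpow : (-altSign n) ^ x = -altSign n := by
    rcases altSign_eq_or n with h | h <;> simp [h, hx.neg_one_pow]
  rw [← sub_neg_eq_add, ← hpow, padicValInt_pow_sub_pow, sub_neg_eq_add]
  · exact padicValInt_oddDoubleFactorial_add_altSign (by omega)
  · simpa using (hD.add_odd hε).two_dvd
  · simpa [Int.odd_iff] using hD
  · exact hx.not_two_dvd_nat

/-- For every positive odd `x` and positive `n`,
`v₂((2n-1)!!^x + (-1)^((n-1)(n-2)/2)) = v₂(2n)`. -/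
theorem stmt3 (x n : ℕ) (hx : Odd x) (hx0 : 0 < x) (hn : 1 ≤ n) :
    padicValInt 2 ((∏ i ∈ Finset.range n, (2 * (i : ℤ) + 1)) ^ x +
      (-1) ^ ((n - 1) * (n - 2) / 2)) = padicValNat 2 (2 * n) :=
  stmt3_general x n hx hn
end

section
/- The sequence defined by x_1 = 3 and, for n ≥ 2, x_n being the smallest integer greater than x_{n-1} with v_2(x_n) = v_2(n), satisfies x_{2^t} = 3·2^t for every t ≥ 0. -/
/-!
By induction, `x n = n + 2 ^ (⌊log₂ n⌋ + 1)` for `n ≥ 1`. Adding a power of two larger than `n`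
does not change `v₂`, so this value is admissible at every step. Inside a dyadic block
`2 ^ L ≤ n < 2 ^ (L + 1)` it increases by one, which is clearly least. At `n = 2 ^ L` the
previous term is `2 ^ (L + 1) - 1`, and the least number above it with `v₂ = L` is `3 · 2 ^ L`,
because its odd cofactor must exceed `2`.
-/

lemma padicValNat_add_pow_of_lt {p n k : ℕ} [Fact p.Prime] (hn : n ≠ 0) (hlt : n < p ^ k) :
    padicValNat p (n + p ^ k) = padicValNat p n := by
  have hval : padicValNat p n < k :=
    (Nat.pow_lt_pow_iff_right (Fact.out : p.Prime).one_lt).mp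
      ((Nat.le_of_dvd (Nat.pos_of_ne_zero hn) pow_padicValNat_dvd).trans_lt hlt)
  have hpk : (p : ℚ) ^ k ≠ 0 := pow_ne_zero _ (Nat.cast_ne_zero.mpr (Fact.out : p.Prime).ne_zero)
  have key := padicValRat.add_eq_of_lt (p := p) (q := n) (r := (p : ℚ) ^ k)
    (by positivity) (Nat.cast_ne_zero.mpr hn) hpk
    (by rw [padicValRat.of_nat, padicValRat.pow _, padicValRat.self (Fact.out : p.Prime).one_lt,
          mul_one]
        exact_mod_cast hval)
  rw [← Nat.cast_pow, ← Nat.cast_add, padicValRat.of_nat, padicValRat.of_nat] at key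
  exact_mod_cast key

lemma succ_mul_pow_le_of_padicValNat_eq {p m L : ℕ} [Fact p.Prime] (hv : padicValNat p m = L)
    (hm : p ^ (L + 1) ≤ m) : (p + 1) * p ^ L ≤ m := by
  have hp := (Fact.out : p.Prime)
  have hm0 : m ≠ 0 := by rintro rfl; exact absurd hm (by simp [hp.ne_zero])
  obtain ⟨c, rfl⟩ : p ^ L ∣ m := hv ▸ pow_padicValNat_dvd
  have hc : p ≤ c := by
    rw [pow_succ, mul_comm] at hm
    exact Nat.le_of_mul_le_mul_right (by linarith) (pow_pos hp.pos L)
  have hcp : c ≠ p := by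
    rintro rfl
    exact pow_succ_padicValNat_not_dvd hm0 (by rw [hv, pow_succ])
  calc (p + 1) * p ^ L = p ^ L * (p + 1) := mul_comm _ _
    _ ≤ p ^ L * c := Nat.mul_le_mul_left _ (by omega)

def addNextTwoPow (n : ℕ) : ℕ := n + 2 ^ (Nat.log 2 n + 1)

lemma addNextTwoPow_two_pow (t : ℕ) : addNextTwoPow (2 ^ t) = 3 * 2 ^ t := by
  rw [addNextTwoPow, Nat.log_pow one_lt_two, pow_succ]
  ring

lemma padicValNat_addNextTwoPow {n : ℕ} (hn : n ≠ 0) :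
    padicValNat 2 (addNextTwoPow n) = padicValNat 2 n :=
  padicValNat_add_pow_of_lt hn (Nat.lt_pow_succ_log_self one_lt_two n)

lemma addNextTwoPow_succ_of_log_eq {n : ℕ} (h : Nat.log 2 n = Nat.log 2 (n + 1)) :
    addNextTwoPow (n + 1) = addNextTwoPow n + 1 := by
  rw [addNextTwoPow, addNextTwoPow, ← h]
  ring

lemma addNextTwoPow_of_succ_eq_two_pow {n L : ℕ} (hn : n ≠ 0) (hL : n + 1 = 2 ^ L) :
    addNextTwoPow n = n + 2 ^ L := by
  have hlog : Nat.log 2 n < L := Nat.log_lt_of_lt_pow hn (by omega)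
  have hle : 2 ^ L ≤ 2 ^ (Nat.log 2 n + 1) := hL ▸ Nat.lt_pow_succ_log_self one_lt_two n
  have : L ≤ Nat.log 2 n + 1 := (Nat.pow_le_pow_iff_right one_lt_two).mp hle
  rw [addNextTwoPow, show Nat.log 2 n + 1 = L by omega]

theorem isLeast_addNextTwoPow_succ {n : ℕ} (hn : n ≠ 0) :
    IsLeast {m | addNextTwoPow n < m ∧ padicValNat 2 m = padicValNat 2 (n + 1)}
      (addNextTwoPow (n + 1)) := by
  by_cases hpow : 2 ^ Nat.log 2 (n + 1) = n + 1
  · set L := Nat.log 2 (n + 1)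
    have hprev : addNextTwoPow n = n + 2 ^ L := addNextTwoPow_of_succ_eq_two_pow hn hpow.symm
    have hnext : addNextTwoPow (n + 1) = 3 * 2 ^ L := by rw [← hpow, addNextTwoPow_two_pow]
    refine ⟨⟨?_, padicValNat_addNextTwoPow n.succ_ne_zero⟩, fun m ⟨hm, hv⟩ => ?_⟩
    · rw [hprev, hnext]
      omega
    · rw [← hpow, padicValNat.prime_pow] at hv
      rw [hnext]
      exact succ_mul_pow_le_of_padicValNat_eq hv (by rw [pow_succ]; omega)
  · have hnext := addNextTwoPow_succ_of_log_eq ((Nat.log_eq_log_succ_iff one_lt_two hn).mpr hpow)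
    exact ⟨⟨by omega, padicValNat_addNextTwoPow n.succ_ne_zero⟩, fun m ⟨hm, _⟩ => by omega⟩

theorem eq_addNextTwoPow_of_isLeast (x : ℕ → ℕ) (h1 : x 1 = 3)
    (hrec : ∀ n, 2 ≤ n →
      IsLeast {m : ℕ | x (n - 1) < m ∧ padicValNat 2 m = padicValNat 2 n} (x n))
    {n : ℕ} (hn : 1 ≤ n) : x n = addNextTwoPow n := by
  induction n, hn using Nat.le_induction with
  | base => exact h1
  | succ n hn ih =>
    have hleast := hrec (n + 1) (by omega)
    rw [Nat.add_sub_cancel, ih] at hleast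
    exact hleast.unique (isLeast_addNextTwoPow_succ (by omega))

/-- If `x 1 = 3` and for `n ≥ 2` the term `x n` is the smallest integer greater
than `x (n-1)` with `v₂(x n) = v₂(n)`, then `x (2^t) = 3·2^t` for all `t ≥ 0`. -/
theorem stmt5 (x : ℕ → ℕ) (h1 : x 1 = 3)
    (hrec : ∀ n, 2 ≤ n →
      IsLeast {m : ℕ | x (n - 1) < m ∧ padicValNat 2 m = padicValNat 2 n} (x n)) :
    ∀ t : ℕ, x (2 ^ t) = 3 * 2 ^ t := fun t => by
  rw [eq_addNextTwoPow_of_isLeast x h1 hrec Nat.one_le_two_pow, addNextTwoPow_two_pow]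
end

section
/- Let a > 1 with v_2(a) = 0, and define the sequence x_n by x_1 = a and, for n ≥ 2, x_n being the smallest integer greater than x_{n-1} with v_2(x_n) = v_2(n). Then there exists T such that x_{2^T} = 3·2^T. -/
/-!
Halving the even-indexed terms, `z n = x (2n) / 2`, gives again a sequence in which each term is
the least number above its predecessor with the prescribed 2-adic valuation, because odd-indexed
terms are forced to be `x (2n + 1) = x (2n) + 1`. Its first term `x 2 / 2` is odd and, when
`x 1 = a > 3`, smaller than `a` since `x 2 ≤ a + 3`. Strong induction on `a` thus reaches the
starting value `3`, and `x (2 ^ (T + 1)) = 2 * z (2 ^ T)` climbs back up.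
-/

lemma padicValNat_two_mul {m : ℕ} (hm : m ≠ 0) :
    padicValNat 2 (2 * m) = padicValNat 2 m + 1 := by
  rw [padicValNat.mul two_ne_zero hm, padicValNat.self one_lt_two, add_comm]

lemma padicValNat_two_of_mod_two_eq_one {m : ℕ} (hm : m % 2 = 1) : padicValNat 2 m = 0 :=
  padicValNat.eq_zero_of_not_dvd (by omega)

lemma mod_two_eq_one_of_padicValNat_two_eq_zero {m : ℕ} (hm0 : m ≠ 0)
    (hm : padicValNat 2 m = 0) : m % 2 = 1 := by
  have : ¬ 2 ∣ m := by simpa [padicValNat.eq_zero_iff, hm0] using hm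
  omega

lemma exists_padicValNat_two_eq_one {a : ℕ} (ha : a % 2 = 1) :
    ∃ m, a < m ∧ m ≤ a + 3 ∧ padicValNat 2 m = 1 := by
  -- Of `a + 1` and `a + 3`, take the one that is `2 mod 4`.
  obtain ⟨k, hk, hlo, hhi⟩ : ∃ k, k % 2 = 1 ∧ a < 2 * k ∧ 2 * k ≤ a + 3 := by
    rcases Nat.lt_or_ge (a % 4) 2 with h | h
    · exact ⟨(a + 1) / 2, by omega, by omega, by omega⟩
    · exact ⟨(a + 3) / 2, by omega, by omega, by omega⟩
  refine ⟨2 * k, hlo, hhi, ?_⟩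
  rw [padicValNat_two_mul (by omega), padicValNat_two_of_mod_two_eq_one hk]

def IsMinTwoAdicSeq (x : ℕ → ℕ) : Prop :=
  ∀ n, 2 ≤ n → IsLeast {m : ℕ | x (n - 1) < m ∧ padicValNat 2 m = padicValNat 2 n} (x n)

namespace IsMinTwoAdicSeq

variable {x : ℕ → ℕ} (hx : IsMinTwoAdicSeq x)
include hx

lemma lt {n : ℕ} (hn : 2 ≤ n) : x (n - 1) < x n := (hx n hn).1.1

lemma padicValNat_eq {n : ℕ} (hn : 2 ≤ n) : padicValNat 2 (x n) = padicValNat 2 n :=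
  (hx n hn).1.2

lemma le {n m : ℕ} (hn : 2 ≤ n) (hm : x (n - 1) < m) (hv : padicValNat 2 m = padicValNat 2 n) :
    x n ≤ m :=
  (hx n hn).2 ⟨hm, hv⟩

lemma padicValNat_two_mul {n : ℕ} (hn : 1 ≤ n) :
    padicValNat 2 (x (2 * n)) = padicValNat 2 n + 1 := by
  rw [hx.padicValNat_eq (by omega), _root_.padicValNat_two_mul (by omega)]

lemma two_mul_half {n : ℕ} (hn : 1 ≤ n) : 2 * (x (2 * n) / 2) = x (2 * n) := by
  refine Nat.mul_div_cancel' (dvd_of_one_le_padicValNat ?_)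
  rw [hx.padicValNat_two_mul hn]
  omega

lemma succ_two_mul {n : ℕ} (hn : 1 ≤ n) : x (2 * n + 1) = x (2 * n) + 1 := by
  have heven := hx.two_mul_half hn
  have hle := hx.le (n := 2 * n + 1) (m := x (2 * n) + 1) (by omega) (by simp)
    (by rw [padicValNat_two_of_mod_two_eq_one (by omega),
      padicValNat_two_of_mod_two_eq_one (by omega)])
  have hlt := hx.lt (n := 2 * n + 1) (by omega)
  simp only [Nat.add_sub_cancel] at hlt
  omega

lemma half : IsMinTwoAdicSeq (fun n => x (2 * n) / 2) := by
  intro n hn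
  dsimp only
  have hprev : x (2 * n - 1) = 2 * (x (2 * (n - 1)) / 2) + 1 := by
    rw [show 2 * n - 1 = 2 * (n - 1) + 1 by omega, hx.succ_two_mul (by omega),
      hx.two_mul_half (by omega)]
  have hcur := hx.two_mul_half (n := n) (by omega)
  have hlt := hx.lt (n := 2 * n) (by omega)
  have hhalf_ne : x (2 * n) / 2 ≠ 0 := by omega
  refine ⟨⟨by omega, ?_⟩, fun m ⟨hm, hv⟩ => ?_⟩
  · have h := hx.padicValNat_two_mul (n := n) (by omega)
    rw [← hcur, _root_.padicValNat_two_mul hhalf_ne] at h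
    omega
  · have hle := hx.le (n := 2 * n) (m := 2 * m) (by omega) (by omega)
      (by rw [_root_.padicValNat_two_mul (by omega), _root_.padicValNat_two_mul (by omega), hv])
    omega

lemma half_one {a : ℕ} (h1 : x 1 = a) (ha : 3 < a) (ha2 : a % 2 = 1) :
    1 < x 2 / 2 ∧ x 2 / 2 < a ∧ padicValNat 2 (x 2 / 2) = 0 := by
  have hcur : 2 * (x 2 / 2) = x 2 := hx.two_mul_half (n := 1) le_rfl
  have hgt : a < x 2 := h1 ▸ hx.lt le_rfl
  have hprev : x (2 - 1) = a := h1
  obtain ⟨m, hm, hm3, hv⟩ := exists_padicValNat_two_eq_one ha2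
  have hle := hx.le (n := 2) le_rfl (by omega) (hv.trans (padicValNat.self one_lt_two).symm)
  refine ⟨by omega, by omega, ?_⟩
  have h : padicValNat 2 (x 2) = padicValNat 2 1 + 1 := hx.padicValNat_two_mul le_rfl
  rw [← hcur, _root_.padicValNat_two_mul (by omega)] at h
  simpa using h

end IsMinTwoAdicSeq

theorem IsMinTwoAdicSeq.exists_eq_three_mul_two_pow {x : ℕ → ℕ} (hx : IsMinTwoAdicSeq x)
    (h1 : 1 < x 1) (h2 : padicValNat 2 (x 1) = 0) : ∃ T : ℕ, x (2 ^ T) = 3 * 2 ^ T := by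
  induction ha : x 1 using Nat.strong_induction_on generalizing x with
  | _ a IH =>
    rw [ha] at h1 h2
    by_cases ha3 : a = 3
    · exact ⟨0, by simpa [ha3] using ha⟩
    have hodd := mod_two_eq_one_of_padicValNat_two_eq_zero (by omega) h2
    obtain ⟨hz1, hza, hzv⟩ := hx.half_one ha (by omega) hodd
    obtain ⟨S, hS⟩ := IH _ hza hx.half hz1 hzv rfl
    refine ⟨S + 1, ?_⟩
    rw [pow_succ', ← hx.two_mul_half Nat.one_le_two_pow, hS]
    ring

/-- If `a > 1` is odd, `x 1 = a`, and for `n ≥ 2` the term `x n` is the smallest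
integer greater than `x (n-1)` with `v₂(x n) = v₂(n)`, then `x (2^T) = 3·2^T`
for some `T`. -/
theorem stmt7 (a : ℕ) (ha : 1 < a) (ha2 : padicValNat 2 a = 0)
    (x : ℕ → ℕ) (h1 : x 1 = a)
    (hrec : ∀ n, 2 ≤ n →
      IsLeast {m : ℕ | x (n - 1) < m ∧ padicValNat 2 m = padicValNat 2 n} (x n)) :
    ∃ T : ℕ, x (2 ^ T) = 3 * 2 ^ T := by
  subst h1
  exact IsMinTwoAdicSeq.exists_eq_three_mul_two_pow hrec ha ha2
end

section
/- Let y_n be defined by y_1 = 3, y_2 = 6, y_{2n-1} = 2·y_{n-1} + 1 (n ≥ 2), and y_{2n} = 2·y_n (n ≥ 2). Then for every n ≥ 1, v_2(y_n) = v_2(n). -/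
/-! Write `n = 2 ^ k * m` with `m` odd. The doubling rule gives `y n = 2 ^ k * y m`, and the odd
rule makes `y m` odd, so both `n` and `y n` have 2-adic valuation exactly `k`. -/

theorem map_two_pow_mul_of_map_two_mul {f : ℕ → ℕ} (hdouble : ∀ m, 0 < m → f (2 * m) = 2 * f m)
    (k : ℕ) {m : ℕ} (hm : 0 < m) : f (2 ^ k * m) = 2 ^ k * f m := by
  induction k with
  | zero => simp
  | succ k ih =>
    rw [pow_succ', mul_assoc, hdouble _ (by positivity), ih, mul_assoc]

theorem padicValNat_two_pow_mul_of_odd {m : ℕ} (hm : Odd m) (k : ℕ) :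
    padicValNat 2 (2 ^ k * m) = k := by
  rw [padicValNat_base_pow_mul one_lt_two hm.pos.ne',
    padicValNat.eq_zero_of_not_dvd hm.not_two_dvd_nat, zero_add]

theorem padicValNat_two_map_eq {f : ℕ → ℕ} (hdouble : ∀ m, 0 < m → f (2 * m) = 2 * f m)
    (hodd : ∀ m, Odd m → Odd (f m)) {n : ℕ} (hn : n ≠ 0) :
    padicValNat 2 (f n) = padicValNat 2 n := by
  obtain ⟨k, m, hm, rfl⟩ := Nat.exists_eq_two_pow_mul_odd hn
  rw [map_two_pow_mul_of_map_two_mul hdouble k hm.pos, padicValNat_two_pow_mul_of_odd (hodd m hm),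
    padicValNat_two_pow_mul_of_odd hm]

/-- If `y 1 = 3`, `y 2 = 6`, `y (2n-1) = 2·y (n-1) + 1` and `y (2n) = 2·y n`
for `n ≥ 2`, then `v₂(y n) = v₂(n)` for every `n ≥ 1`. -/
theorem stmt10 (y : ℕ → ℕ) (h1 : y 1 = 3) (h2 : y 2 = 6)
    (hodd : ∀ n, 2 ≤ n → y (2 * n - 1) = 2 * y (n - 1) + 1)
    (heven : ∀ n, 2 ≤ n → y (2 * n) = 2 * y n) :
    ∀ n, 1 ≤ n → padicValNat 2 (y n) = padicValNat 2 n := by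
  have hy_double : ∀ m, 0 < m → y (2 * m) = 2 * y m := by
    intro m hm
    rcases (Nat.succ_le_of_lt hm).eq_or_lt with rfl | hm2
    · rw [h1, h2]
    · exact heven m hm2
  have hy_odd : ∀ m, Odd m → Odd (y m) := by
    rintro _ ⟨k, rfl⟩
    rcases Nat.eq_zero_or_pos k with rfl | hk
    · rw [mul_zero, zero_add, h1]
      decide
    · have hstep := hodd (k + 1) (by omega)
      rw [show 2 * (k + 1) - 1 = 2 * k + 1 by omega, Nat.add_sub_cancel] at hstep
      rw [hstep]
      exact odd_two_mul_add_one _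
  intro n hn
  exact padicValNat_two_map_eq hy_double hy_odd (by omega)
end

section
/- Let x_n be defined by x_1 = 3 and, for n ≥ 2, x_n being the smallest integer greater than x_{n-1} with v_2(x_n) = v_2(n). Then for every n ≥ 1, the binary expansion of x_n does not begin with the digits 10; equivalently, writing x_n with most significant bit 2^k, one has x_n ≥ 2^k + 2^{k-1}. -/
/-!
The sequence has the closed form `x n = n + 2 ^ (log₂ n + 1)`: the binary expansion of `n` with
a digit `1` written in front of it, which therefore begins with `11`. Writing a `1` above the
leading bit does not change the 2-adic valuation, so by induction it suffices to see that this
value is the least admissible one. Within a block `2^L ≤ n < 2^(L+1)` consecutive `n` give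
consecutive values; at `n = 2^L` the previous value is `2^(L+1) - 1`, and the least number above
it with valuation `L` is `3 · 2^L`.
-/

theorem padicValNat_add_of_pow_succ_dvd {p n m : ℕ} [Fact p.Prime] (hn : n ≠ 0)
    (hm : p ^ (padicValNat p n + 1) ∣ m) : padicValNat p (n + m) = padicValNat p n := by
  have hnm : n + m ≠ 0 := by omega
  apply le_antisymm
  · by_contra! h
    have hdvd : p ^ (padicValNat p n + 1) ∣ n + m := (padicValNat_dvd_iff_le hnm).2 h
    exact pow_succ_padicValNat_not_dvd hn ((Nat.dvd_add_left hm).1 hdvd)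
  · exact (padicValNat_dvd_iff_le hnm).1 <|
      dvd_add pow_padicValNat_dvd ((pow_dvd_pow p (Nat.le_succ _)).trans hm)

/-- The cofactor of `p ^ padicValNat p m` in `m` is prime to `p`, so once it is at least `p`
it is at least `p + 1`. -/
theorem pow_succ_add_pow_padicValNat_le {p m : ℕ} [hp : Fact p.Prime]
    (h : p ^ (padicValNat p m + 1) ≤ m) :
    p ^ (padicValNat p m + 1) + p ^ padicValNat p m ≤ m := by
  set v := padicValNat p m
  have hm : m ≠ 0 := by have := Nat.one_le_pow (v + 1) p hp.out.pos; omega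
  obtain ⟨q, hq⟩ : p ^ v ∣ m := pow_padicValNat_dvd
  have hpv : 0 < p ^ v := Nat.pow_pos hp.out.pos
  have hpq : p ≤ q := by
    rw [hq, pow_succ] at h
    exact Nat.le_of_mul_le_mul_left h hpv
  have hqp : q ≠ p := by
    rintro rfl
    exact pow_succ_padicValNat_not_dvd hm (by rw [pow_succ, ← hq])
  calc p ^ (v + 1) + p ^ v = p ^ v * (p + 1) := by ring
    _ ≤ p ^ v * q := Nat.mul_le_mul_left _ (by omega)
    _ = m := hq.symm

def prependOne (n : ℕ) : ℕ := n + 2 ^ (Nat.log 2 n + 1)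

theorem padicValNat_prependOne {n : ℕ} (hn : n ≠ 0) :
    padicValNat 2 (prependOne n) = padicValNat 2 n :=
  padicValNat_add_of_pow_succ_dvd hn (pow_dvd_pow 2 (by simpa using padicValNat_le_nat_log n))

theorem log_prependOne {n : ℕ} (hn : n ≠ 0) : Nat.log 2 (prependOne n) = Nat.log 2 n + 1 := by
  have hlo := Nat.pow_log_le_self 2 hn
  have hhi := Nat.lt_pow_succ_log_self one_lt_two n
  apply Nat.log_eq_of_pow_le_of_lt_pow <;> simp only [prependOne, pow_succ] at * <;> omega

theorem prependOne_succ_of_log_eq {n : ℕ} (h : Nat.log 2 n = Nat.log 2 (n + 1)) :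
    prependOne (n + 1) = prependOne n + 1 := by
  simp only [prependOne, h]
  omega

theorem prependOne_pow (L : ℕ) : prependOne (2 ^ L) = 2 ^ (L + 1) + 2 ^ L := by
  rw [prependOne, Nat.log_pow one_lt_two, add_comm]

theorem prependOne_of_log_lt {n : ℕ} (hn : n ≠ 0) (h : Nat.log 2 n < Nat.log 2 (n + 1)) :
    prependOne n + 1 = 2 ^ (Nat.log 2 (n + 1) + 1) := by
  have hpow := (Nat.log_lt_log_succ_iff one_lt_two hn).1 h
  have hhi := Nat.lt_pow_succ_log_self one_lt_two n
  have hlog : Nat.log 2 n + 1 = Nat.log 2 (n + 1) := by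
    refine le_antisymm h (Nat.le_of_lt_succ ?_)
    exact (Nat.pow_lt_pow_iff_right one_lt_two).1 (by omega)
  rw [prependOne, hlog, pow_succ]
  omega

theorem prependOne_strictMono : StrictMono prependOne := fun m n h => by
  have := Nat.pow_le_pow_right two_pos (Nat.succ_le_succ (Nat.log_mono_right (b := 2) h.le))
  simp only [prependOne]
  omega

theorem isLeast_prependOne_succ {n : ℕ} (hn : n ≠ 0) :
    IsLeast {m | prependOne n < m ∧ padicValNat 2 m = padicValNat 2 (n + 1)}
      (prependOne (n + 1)) := by
  refine ⟨⟨prependOne_strictMono n.lt_succ_self, padicValNat_prependOne n.succ_ne_zero⟩,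
    fun m ⟨hlt, hv⟩ => ?_⟩
  rcases (Nat.log_mono_right n.le_succ).eq_or_lt with hlog | hlog
  · rw [prependOne_succ_of_log_eq hlog]
    exact hlt
  · have hsucc := prependOne_of_log_lt hn hlog
    obtain ⟨L, hL⟩ : ∃ L, n + 1 = 2 ^ L :=
      ⟨_, ((Nat.log_lt_log_succ_iff one_lt_two hn).1 hlog).symm⟩
    rw [hL, Nat.log_pow one_lt_two] at hsucc
    rw [hL, padicValNat.prime_pow] at hv
    rw [hL, prependOne_pow, ← hv]
    exact pow_succ_add_pow_padicValNat_le (by rw [hv]; omega)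

theorem eq_prependOne (x : ℕ → ℕ) (h1 : x 1 = 3)
    (hrec : ∀ n, 2 ≤ n →
      IsLeast {m : ℕ | x (n - 1) < m ∧ padicValNat 2 m = padicValNat 2 n} (x n)) :
    ∀ n, 1 ≤ n → x n = prependOne n := by
  intro n hn
  induction n, hn using Nat.le_induction with
  | base => simpa [prependOne] using h1
  | succ n hn ih =>
    exact (hrec (n + 1) (by omega)).unique (by simpa [ih] using isLeast_prependOne_succ (by omega))

/-- For the minimal recursive sequence starting at `3` (w.r.t. 2-adic valuation),
the binary expansion of `x n` does not begin with `10`: writing the most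
significant bit of `x n` as `2^k` (so `k = Nat.log 2 (x n)`), one has
`x n ≥ 2^k + 2^(k-1)`. -/
theorem stmt11 (x : ℕ → ℕ) (h1 : x 1 = 3)
    (hrec : ∀ n, 2 ≤ n →
      IsLeast {m : ℕ | x (n - 1) < m ∧ padicValNat 2 m = padicValNat 2 n} (x n)) :
    ∀ n, 1 ≤ n →
      2 ^ (Nat.log 2 (x n)) + 2 ^ (Nat.log 2 (x n) - 1) ≤ x n := by
  intro n hn
  rw [eq_prependOne x h1 hrec n hn, log_prependOne (by omega), Nat.add_sub_cancel, prependOne,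
    add_comm n]
  exact Nat.add_le_add_left (Nat.pow_log_le_self 2 (by omega)) _
end

section
/- Let a(n) be defined by a(0) = 0, a(1) = 1, a(2n) = 2a(n) + 1 and a(2n+1) = 2a(n+1) for n ≥ 1. Then a(n) enumerates exactly the positive integers whose binary expansion does not begin with 10, i.e., integers m such that m < 2^{k+1} implies m ∉ [2^k, 2^k + 2^{k-1}) for the leading bit position k ≥ 1. -/
/-!
Shifting the index, `b n = a (n + 1)` satisfies `b (2n+1) = 2 b n + 1` and `b (2n) = 2 b n`,
so `b n` is `n` with a leading `1` written in front of its binary expansion: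
`a (n + 1) = n + 2 ^ Nat.size n`. For `n ≥ 1` these numbers are exactly those whose binary
expansion starts with `11`, and `n = 0` gives `1`.
-/

namespace Nat

theorem log_two_add_two_pow_size (n : ℕ) : Nat.log 2 (n + 2 ^ n.size) = n.size := by
  refine Nat.log_eq_of_pow_le_of_lt_pow (by omega) ?_
  have := lt_size_self n
  rw [pow_succ]
  omega

theorem size_eq_of_pow_le_of_lt_pow {n k : ℕ} (hk : 1 ≤ k) (hlo : 2 ^ (k - 1) ≤ n)
    (hhi : n < 2 ^ k) : n.size = k := by
  have hle : n.size ≤ k := size_le.mpr hhi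
  have hgt : k - 1 < n.size := lt_size.mpr hlo
  omega

theorem exists_add_two_pow_size_eq_iff {m : ℕ} :
    (∃ n, n + 2 ^ n.size = m) ↔
      0 < m ∧ (Nat.log 2 m = 0 ∨ 2 ^ (Nat.log 2 m) + 2 ^ (Nat.log 2 m - 1) ≤ m) := by
  constructor
  · rintro ⟨n, rfl⟩
    rw [log_two_add_two_pow_size]
    rcases Nat.eq_zero_or_pos n with rfl | hn
    · simp
    · have hlo : 2 ^ (n.size - 1) ≤ n := lt_size.mp (by have := size_pos.mpr hn; omega)
      exact ⟨by positivity, Or.inr (by omega)⟩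
  · rintro ⟨hm, hlog | hlo⟩
    · have : m = 1 := by have := Nat.log_eq_zero_iff.mp hlog; omega
      exact ⟨0, by simp [this]⟩
    · set k := Nat.log 2 m
      have hk : 1 ≤ k := by
        by_contra! hk0
        rw [Nat.lt_one_iff.mp hk0] at hlo
        exact hk0.not_ge (Nat.log_pos one_lt_two (by simpa using hlo))
      have hhi : m < 2 ^ (k + 1) := Nat.lt_pow_succ_log_self one_lt_two m
      have hpow : 2 ^ k = 2 * 2 ^ (k - 1) := by rw [← pow_succ']; congr 1; omega
      refine ⟨m - 2 ^ k, ?_⟩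
      rw [size_eq_of_pow_le_of_lt_pow hk (by omega) (by rw [pow_succ] at hhi; omega)]
      have : 2 ^ k ≤ m := Nat.pow_log_le_self 2 hm.ne'
      omega

end Nat

theorem deleham_apply_succ (a : ℕ → ℕ) (h1 : a 1 = 1)
    (heven : ∀ n, 1 ≤ n → a (2 * n) = 2 * a n + 1)
    (hodd : ∀ n, 1 ≤ n → a (2 * n + 1) = 2 * a (n + 1)) (n : ℕ) :
    a (n + 1) = n + 2 ^ n.size := by
  induction n using Nat.binaryRec' with
  | zero => simpa using h1
  | bit b k hbk ih =>
    rw [Nat.size_bit (Nat.bit_ne_zero_iff.mpr hbk), pow_succ]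
    cases b with
    | false =>
      have hk : 1 ≤ k := Nat.pos_of_ne_zero fun hk0 => Bool.false_ne_true (hbk hk0)
      rw [Nat.bit_false_apply, hodd k hk, ih]
      ring
    | true =>
      rw [Nat.bit_true_apply, show 2 * k + 1 + 1 = 2 * (k + 1) by ring,
        heven (k + 1) (by omega), ih]
      ring

theorem stmt12_general (a : ℕ → ℕ) (h1 : a 1 = 1)
    (heven : ∀ n, 1 ≤ n → a (2 * n) = 2 * a n + 1)
    (hodd : ∀ n, 1 ≤ n → a (2 * n + 1) = 2 * a (n + 1)) :
    a '' {n : ℕ | 1 ≤ n} =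
      {m : ℕ | 0 < m ∧ (Nat.log 2 m = 0 ∨
        2 ^ (Nat.log 2 m) + 2 ^ (Nat.log 2 m - 1) ≤ m)} := by
  ext m
  simp only [Set.mem_image, Set.mem_ofPred_eq, ← Nat.exists_add_two_pow_size_eq_iff]
  constructor
  · rintro ⟨n, hn, rfl⟩
    obtain ⟨k, rfl⟩ := Nat.exists_eq_add_of_le' hn
    exact ⟨k, (deleham_apply_succ a h1 heven hodd k).symm⟩
  · rintro ⟨k, rfl⟩
    exact ⟨k + 1, by omega, deleham_apply_succ a h1 heven hodd k⟩

/-- Deleham's recursion `a 0 = 0`, `a 1 = 1`, `a (2n) = 2·a n + 1`,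
`a (2n+1) = 2·a (n+1)` (for `n ≥ 1`) enumerates exactly the positive integers
whose binary expansion does not begin with `10`, i.e. positive `m` such that
either the leading bit position `k = Nat.log 2 m` is `0`, or
`m ≥ 2^k + 2^(k-1)`. -/
theorem stmt12 (a : ℕ → ℕ) (h0 : a 0 = 0) (h1 : a 1 = 1)
    (heven : ∀ n, 1 ≤ n → a (2 * n) = 2 * a n + 1)
    (hodd : ∀ n, 1 ≤ n → a (2 * n + 1) = 2 * a (n + 1)) :
    a '' {n : ℕ | 1 ≤ n} =
      {m : ℕ | 0 < m ∧ (Nat.log 2 m = 0 ∨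
        2 ^ (Nat.log 2 m) + 2 ^ (Nat.log 2 m - 1) ≤ m)} :=
  stmt12_general a h1 heven hodd
end

section
/- Define x_n by x_1 = 4 and, for n ≥ 2, x_n is the smallest integer greater than x_{n-1} such that the number of ones in the binary expansion of x_n has the same parity as the number of ones in the binary expansion of n. Then x_n = 2n + 3 if n·v_2(n+1) is even, and x_n = 2n + 2 otherwise. -/
/-! Writing `t` for the Thue–Morse parity, `t (2k) = t k` and `t (2k + 1) ≠ t k`. Hence if
`x (n-1)` is `2n` or `2n + 1`, then `2n + 1` is never admissible for `x n`, and exactly one of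
`2(n+1)`, `2(n+1) + 1` is, so `x n` is that one. It is `2(n+1)` exactly when `t (n+1) = t n`,
i.e. when `v₂(n+1)` is odd, since `t (n+1) ≡ t n + 1 + v₂(n+1)` (adding one to `n` clears the
`v₂(n+1)` trailing ones and sets one bit). -/

def thueMorse (m : ℕ) : ℕ := (Nat.digits 2 m).sum % 2

lemma thueMorse_lt_two (m : ℕ) : thueMorse m < 2 := Nat.mod_lt _ two_pos

lemma thueMorse_two_mul (m : ℕ) : thueMorse (2 * m) = thueMorse m := by
  rcases m.eq_zero_or_pos with rfl | hm
  · rfl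
  · simp [thueMorse, Nat.digits_base_mul one_lt_two hm]

lemma thueMorse_two_mul_add_one (m : ℕ) : thueMorse (2 * m + 1) = (thueMorse m + 1) % 2 := by
  rw [thueMorse, Nat.digits_def' one_lt_two (Nat.succ_pos _),
    show (2 * m + 1) % 2 = 1 by omega, show (2 * m + 1) / 2 = m by omega, List.sum_cons,
    thueMorse]
  omega

lemma thueMorse_succ (n : ℕ) :
    thueMorse (n + 1) = (thueMorse n + 1 + padicValNat 2 (n + 1)) % 2 := by
  induction n using Nat.strong_induction_on with
  | _ n ih =>
    obtain ⟨m, rfl | rfl⟩ := Nat.even_or_odd' n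
    · have hv : padicValNat 2 (2 * m + 1) = 0 := padicValNat.eq_zero_of_not_dvd (by omega)
      rw [thueMorse_two_mul_add_one, thueMorse_two_mul, hv]
    · have hv : padicValNat 2 (2 * (m + 1)) = 1 + padicValNat 2 (m + 1) := by
        rw [padicValNat.mul two_ne_zero m.succ_ne_zero, padicValNat.self one_lt_two]
      rw [show 2 * m + 1 + 1 = 2 * (m + 1) by ring, thueMorse_two_mul, hv,
        thueMorse_two_mul_add_one, ih m (by omega)]
      omega

lemma even_mul_padicValNat_two_succ_iff (n : ℕ) :
    Even (n * padicValNat 2 (n + 1)) ↔ Even (padicValNat 2 (n + 1)) := by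
  rcases Nat.even_or_odd n with hn | hn
  · rw [padicValNat.eq_zero_of_not_dvd (by rcases hn with ⟨k, rfl⟩; omega)]
    simp
  · simp [Nat.even_mul, Nat.not_even_iff_odd.mpr hn]

lemma mem_Icc_of_isLeast_thueMorse {k a b : ℕ} (ha : a ∈ Set.Icc (2 * k) (2 * k + 1))
    (hb : IsLeast {m | a < m ∧ thueMorse m = thueMorse k} b) :
    b ∈ Set.Icc (2 * (k + 1)) (2 * (k + 1) + 1) := by
  have h0 := thueMorse_two_mul (k + 1)
  have h1 := thueMorse_two_mul_add_one (k + 1)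
  have hodd := thueMorse_two_mul_add_one k
  have hk := thueMorse_lt_two k
  have hk₁ := thueMorse_lt_two (k + 1)
  obtain ⟨⟨hab, hbk⟩, hleast⟩ := hb
  obtain ⟨ha₀, ha₁⟩ := ha
  have hb_ne : b ≠ 2 * k + 1 := by rintro rfl; omega
  have hb_le : b ≤ 2 * (k + 1) + 1 := by
    by_cases h : thueMorse (2 * (k + 1)) = thueMorse k
    · exact (hleast ⟨by omega, h⟩).trans (by omega)
    · exact hleast ⟨by omega, by omega⟩
  exact ⟨by omega, hb_le⟩

lemma eq_ite_of_thueMorse_eq {n a : ℕ} (ha : a ∈ Set.Icc (2 * (n + 1)) (2 * (n + 1) + 1))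
    (ht : thueMorse a = thueMorse n) :
    a = if Even (n * padicValNat 2 (n + 1)) then 2 * n + 3 else 2 * n + 2 := by
  have h0 := thueMorse_two_mul (n + 1)
  have h1 := thueMorse_two_mul_add_one (n + 1)
  have hsucc := thueMorse_succ n
  have hn := thueMorse_lt_two n
  obtain ⟨ha₀, ha₁⟩ := ha
  obtain rfl | rfl : a = 2 * (n + 1) ∨ a = 2 * (n + 1) + 1 := by omega
  all_goals split_ifs with hv <;> rw [even_mul_padicValNat_two_succ_iff, Nat.even_iff] at hv <;> omega

/-- Let `t m` be the parity of the binary digit sum of `m` (Thue–Morse).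
If `x 1 = 4` and for `n ≥ 2` the term `x n` is the smallest integer greater
than `x (n-1)` with `t (x n) = t n`, then `x n = 2n + 3` when `n·v₂(n+1)` is
even and `x n = 2n + 2` otherwise. -/
theorem stmt13 (x : ℕ → ℕ) (h1 : x 1 = 4)
    (hrec : ∀ n, 2 ≤ n →
      IsLeast {m : ℕ | x (n - 1) < m ∧
        (Nat.digits 2 m).sum % 2 = (Nat.digits 2 n).sum % 2} (x n)) :
    ∀ n, 1 ≤ n →
      x n = if Even (n * padicValNat 2 (n + 1)) then 2 * n + 3 else 2 * n + 2 := by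
  have hx : ∀ n, 1 ≤ n → x n ∈ Set.Icc (2 * (n + 1)) (2 * (n + 1) + 1) ∧
      thueMorse (x n) = thueMorse n := by
    intro n hn
    induction n, hn using Nat.le_induction with
    | base => exact ⟨by simp [h1], by rw [h1]; rfl⟩
    | succ n _ ih =>
      have hleast : IsLeast {m | x n < m ∧ thueMorse m = thueMorse (n + 1)} (x (n + 1)) :=
        hrec (n + 1) (by omega)
      exact ⟨mem_Icc_of_isLeast_thueMorse ih.1 hleast, hleast.1.2⟩
  intro n hn
  exact eq_ite_of_thueMorse_eq (hx n hn).1 (hx n hn).2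
end

section
/- For every odd positive integer n, at least one of t(n+1) = t(n) or t(n+2) = t(n) holds, where t is the Thue-Morse sequence. -/
theorem Nat.digits_sum_add_mul {b : ℕ} (hb : 1 < b) {r : ℕ} (hr : r < b) (k : ℕ) :
    (Nat.digits b (r + b * k)).sum = r + (Nat.digits b k).sum := by
  by_cases hrk : r = 0 ∧ k = 0
  · simp [hrk.1, hrk.2]
  · rw [Nat.digits_add b hb r k hr (by tauto), List.sum_cons]

theorem Nat.digits_two_sum_succ_of_even {k : ℕ} (hk : Even k) :
    (Nat.digits 2 (k + 1)).sum = (Nat.digits 2 k).sum + 1 := by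
  obtain ⟨j, rfl⟩ := hk
  rw [← two_mul, add_comm, Nat.digits_sum_add_mul one_lt_two one_lt_two,
    ← zero_add (2 * j), Nat.digits_sum_add_mul one_lt_two two_pos]
  ring

theorem stmt16_general (n : ℕ) (hodd : Odd n) :
    (Nat.digits 2 (n + 1)).sum % 2 = (Nat.digits 2 n).sum % 2 ∨
    (Nat.digits 2 (n + 2)).sum % 2 = (Nat.digits 2 n).sum % 2 := by
  -- `n + 1` is even, so `t (n + 1) ≠ t (n + 2)` and one of the two parities is that of `n`.
  have hflip : (Nat.digits 2 (n + 2)).sum = (Nat.digits 2 (n + 1)).sum + 1 :=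
    Nat.digits_two_sum_succ_of_even hodd.add_one
  omega

/-- Every odd positive integer is regular with respect to not-change of the
parity of the binary digit sum: `t (n+1) = t n` or `t (n+2) = t n`. -/
theorem stmt16 (n : ℕ) (hn : 1 ≤ n) (hodd : Odd n) :
    (Nat.digits 2 (n + 1)).sum % 2 = (Nat.digits 2 n).sum % 2 ∨
    (Nat.digits 2 (n + 2)).sum % 2 = (Nat.digits 2 n).sum % 2 :=
  stmt16_general n hodd
end
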